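/- Let A be a left brace such that A³ = ⟨0⟩. Then for every element a ∈ A and all integers n, k one has (n·a) ⋆ (k·a) = k·n·(a ⋆ a) + ((n − n²)/2)·k·((a ⋆ a) ⋆ a), where n·a denotes the n-th additive multiple of a and (n − n²)/2 is an integer. -/

import Mathlib

/-- A left brace: `(A, +)` is an abelian group, `(A, *)` is a group, and
`a * (b + c) = a * b + a * c - a` for all `a b c`. -/
class LeftBrace (A : Type*) extends AddCommGroup A, Group A where
  mul_add_eq : ∀ a b c : A, a * (b + c) = a * b + a * c - a

namespace LeftBrace

variable {A : Type*} [LeftBrace A]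

/-- The star operation of a left brace: `a ⋆ b = a * b - a - b`. -/
def star (a b : A) : A := a * b - a - b

/-- `K ⋆ L`: the subgroup of the additive group of `A` generated by all
`x ⋆ y` with `x ∈ K`, `y ∈ L`. -/
def setStar (K L : Set A) : AddSubgroup A :=
  AddSubgroup.closure (Set.image2 star K L)

/-- A subbrace of `A`: a subset that is simultaneously a subgroup of the
additive group of `A` and a subgroup of the multiplicative group of `A`. -/
def IsSubbrace (S : Set A) : Prop :=
  (0 : A) ∈ S ∧ (∀ x ∈ S, ∀ y ∈ S, x + y ∈ S) ∧ (∀ x ∈ S, -x ∈ S) ∧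
    (1 : A) ∈ S ∧ (∀ x ∈ S, ∀ y ∈ S, x * y ∈ S) ∧ (∀ x ∈ S, x⁻¹ ∈ S)

/-- A left ideal of `A`: a subbrace `S` with `a ⋆ b ∈ S` for all `a ∈ A`, `b ∈ S`. -/
def IsLeftIdeal (S : Set A) : Prop :=
  IsSubbrace S ∧ ∀ a : A, ∀ b ∈ S, star a b ∈ S

/-- An ideal of `A`: a subbrace `S` with `a ⋆ z ∈ S` and `z ⋆ a ∈ S`
for all `a ∈ A`, `z ∈ S`. -/
def IsIdeal (S : Set A) : Prop :=
  IsSubbrace S ∧ ∀ a : A, ∀ z ∈ S, star a z ∈ S ∧ star z a ∈ S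

/-- The left series of the brace `A`, with the indexing shifted by one:
`leftSeriesN A 0 = A¹ = A` and `leftSeriesN A n = Aⁿ⁺¹ = A ⋆ Aⁿ`.
In particular `leftSeriesN A 1 = A²` and `leftSeriesN A 2 = A³`. -/
def leftSeriesN (A : Type*) [LeftBrace A] : ℕ → AddSubgroup A
  | 0 => ⊤
  | n + 1 => setStar Set.univ ((leftSeriesN A n : AddSubgroup A) : Set A)

/-- The right series of the brace `A`, with the indexing shifted by one:
`rightSeriesN A 0 = A⁽¹⁾ = A` and `rightSeriesN A n = A⁽ⁿ⁺¹⁾ = A⁽ⁿ⁾ ⋆ A`.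
In particular `rightSeriesN A 2 = A⁽³⁾` and `rightSeriesN A 3 = A⁽⁴⁾`. -/
def rightSeriesN (A : Type*) [LeftBrace A] : ℕ → AddSubgroup A
  | 0 => ⊤
  | n + 1 => setStar ((rightSeriesN A n : AddSubgroup A) : Set A) Set.univ

end LeftBrace

open LeftBrace

/-!
Because `A³ = 0`, the identity `(x * y) ⋆ c = x ⋆ (y ⋆ c) + y ⋆ c + x ⋆ c` makes `x ↦ (x ⋆ ·)` a
homomorphism from the multiplicative group of `A` to the additive group of `End (A, +)`, so
`aⁿ ⋆ c = n • (a ⋆ c)`. From `aⁿ⁺¹ = aⁿ + a + n • (a ⋆ a)` one gets by induction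
`n • a = aⁿ + ((n - n²) / 2) • (a ⋆ a)`, and as `x + y = x * y` whenever `x ⋆ y = 0`, the star of
this sum splits. Finally `(a ⋆ a)ᵐ = m • (a ⋆ a)`, since `(a ⋆ a) ⋆ (a ⋆ a) = 0`.
-/

theorem Int.sub_sq_ediv_two_add_one (n : ℤ) :
    ((n + 1) - (n + 1) ^ 2) / 2 = (n - n ^ 2) / 2 - n := by
  rw [show (n + 1) - (n + 1) ^ 2 = (n - n ^ 2) + (-n) * 2 by ring,
    Int.add_mul_ediv_right _ _ two_ne_zero, sub_eq_add_neg _ n]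

namespace LeftBrace

variable {A : Type*} [LeftBrace A]

theorem zero_eq_one : (0 : A) = 1 := by
  have h := mul_add_eq (1 : A) 0 0
  rw [one_mul, add_zero, one_mul] at h
  exact (by simpa using h : (1 : A) = 0).symm

theorem mul_eq_add_add_star (a b : A) : a * b = a + b + star a b := by
  rw [star]; abel

theorem star_add_right (a b c : A) : star a (b + c) = star a b + star a c := by
  simp only [star, mul_add_eq]; abel

def starHom (a : A) : A →+ A := AddMonoidHom.mk' (star a) (star_add_right a)

theorem star_zsmul_right (a b : A) (k : ℤ) : star a (k • b) = k • star a b :=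
  map_zsmul (starHom a) k b

theorem mul_star (x y c : A) : star (x * y) c = star x (star y c) + star y c + star x c := by
  have hxyc : x * (y * c) = star x y + star x c + star x (star y c) + x + (y * c) := by
    rw [← star_add_right, ← star_add_right, ← mul_eq_add_add_star y c, star]; abel
  rw [star, mul_assoc, hxyc, mul_eq_add_add_star y c, mul_eq_add_add_star x y]; abel

theorem star_mem_leftSeriesN_succ (x y : A) {n : ℕ} (hy : y ∈ leftSeriesN A n) :
    star x y ∈ leftSeriesN A (n + 1) :=
  AddSubgroup.subset_closure (Set.mem_image2_of_mem (Set.mem_univ x) hy)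

theorem star_star_eq_zero_of_leftSeriesN_two_eq_bot (h3 : leftSeriesN A 2 = ⊥) (x y z : A) :
    star x (star y z) = 0 := by
  have h := star_mem_leftSeriesN_succ x _ (star_mem_leftSeriesN_succ (n := 0) y z trivial)
  rwa [h3, AddSubgroup.mem_bot] at h

section CubeZero

variable (H : ∀ x y z : A, star x (star y z) = 0)
include H

theorem star_mul_left (x y c : A) : star (x * y) c = star x c + star y c := by
  rw [mul_star, H, zero_add, add_comm]

theorem star_zpow_left (a c : A) (n : ℤ) : star (a ^ n) c = n • star a c := by
  let f : A →* Multiplicative (A →+ A) :=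
    MonoidHom.mk' (fun x => .ofAdd (starHom x)) fun x y => by
      ext c; exact star_mul_left H x y c
  simpa [f, starHom] using DFunLike.congr_fun (congrArg Multiplicative.toAdd (map_zpow f a n)) c

theorem star_add_left_of_star_eq_zero {x y : A} (hxy : star x y = 0) (c : A) :
    star (x + y) c = star x c + star y c := by
  rw [← star_mul_left H, mul_eq_add_add_star, hxy, add_zero]

theorem zpow_add_one_eq (a : A) (n : ℤ) : a ^ (n + 1) = a ^ n + a + n • star a a := by
  rw [zpow_add_one, mul_eq_add_add_star, star_zpow_left H]

theorem zsmul_eq_zpow_add (a : A) (n : ℤ) :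
    n • a = a ^ n + ((n - n ^ 2) / 2) • star a a := by
  have step (m : ℤ) : (m + 1) • a = a ^ (m + 1) + (((m + 1) - (m + 1) ^ 2) / 2) • star a a ↔
      m • a = a ^ m + ((m - m ^ 2) / 2) • star a a := by
    rw [zpow_add_one_eq H, Int.sub_sq_ediv_two_add_one, add_smul, sub_smul, one_smul]
    constructor <;> intro h <;> linear_combination (norm := module) h
  induction n using Int.induction_on with
  | zero => simp [← zero_eq_one]
  | succ i ih => exact (step i).2 ih
  | pred i ih => exact (step _).1 (by rwa [sub_add_cancel])

theorem zsmul_star (a : A) (n : ℤ) :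
    star (n • a) a = n • star a a + ((n - n ^ 2) / 2) • star (star a a) a := by
  have hsq : ((n - n ^ 2) / 2) • star a a = star a a ^ ((n - n ^ 2) / 2) := by
    simpa [H] using zsmul_eq_zpow_add H (star a a) ((n - n ^ 2) / 2)
  have hzero : star (a ^ n) (((n - n ^ 2) / 2) • star a a) = 0 := by
    rw [star_zsmul_right, H, smul_zero]
  rw [zsmul_eq_zpow_add H a n, star_add_left_of_star_eq_zero H hzero, hsq,
    star_zpow_left H, star_zpow_left H]

end CubeZero

end LeftBrace

/-- If `A` is a left brace with `A³ = ⟨0⟩` (here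
`A³ = A ⋆ (A ⋆ A) = leftSeriesN A 2`), then for every `a ∈ A` and all integers
`n, k` one has `(n·a) ⋆ (k·a) = k·n·(a ⋆ a) + ((n − n²)/2)·k·((a ⋆ a) ⋆ a)`
(note that `n − n²` is even, so the integer division `(n − n²)/2` is exact). -/
theorem smul_star_smul {A : Type*} [LeftBrace A]
    (h3 : leftSeriesN A 2 = ⊥) (a : A) (n k : ℤ) :
    star (n • a) (k • a) =
      (k * n) • star a a + (((n - n ^ 2) / 2) * k) • star (star a a) a := by
  rw [star_zsmul_right,
    zsmul_star (star_star_eq_zero_of_leftSeriesN_two_eq_bot h3) a n]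
  module
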